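/- Let H be a Heisenberg group (a group whose commutator subgroup [H,H] is contained in its centre Z(H)) such that the centre Z(H) has finite index in H, let A be a maximal abelian subgroup of H, and let χ : Z(H) → ℂˣ be a character with ker(χ) ∩ [H,H] = {1}. If χ₁, χ₂ : A → ℂˣ are two homomorphisms whose restrictions to Z(H) both equal χ, then there exists x ∈ H such that χ₂(a) = χ₁(x a x⁻¹) for all a ∈ A. -/

import Mathlib

/-!
Put `ψ = χ₂ / χ₁`, a character of `A` trivial on `Z(H)`. Since `x a x⁻¹ = [x, a] a` with
`[x, a]` central, `χ₁ (x a x⁻¹) = χ [x, a] · χ₁ a`, so it suffices to find `x` with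
`χ [x, a] = ψ a` for all `a ∈ A`. The pairing `(x, a) ↦ χ [x, a]` is bimultiplicative and
descends to `H/A × A/Z(H)`. It is nondegenerate in `x` because `A` is its own centralizer,
and in `a` because `χ` is injective on `[H, H]`. A pairing of finite groups into `ℂˣ` that is
nondegenerate on both sides makes each group the character group of the other, so `ψ`, viewed
as a character of `A/Z(H)`, is `χ [x, ·]` for some `x`.
-/

/-- A subgroup is maximal abelian: it is abelian, and any abelian subgroup
containing it is equal to it. -/
def Subgroup.IsMaximalAbelian {H : Type*} [Group H] (A : Subgroup H) : Prop :=
  (∀ x ∈ A, ∀ y ∈ A, x * y = y * x) ∧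
    ∀ B : Subgroup H, A ≤ B → (∀ x ∈ B, ∀ y ∈ B, x * y = y * x) → B = A

open Function

open scoped IsMulCommutative in
theorem Nat.card_monoidHom_complexUnits (G : Type*) [Group G] [IsMulCommutative G] [Finite G] :
    Nat.card (G →* ℂˣ) = Nat.card G :=
  have : NeZero (Monoid.exponent G : ℂ) :=
    ⟨Nat.cast_ne_zero.mpr Monoid.exponent_ne_zero_of_finite⟩
  CommGroup.card_monoidHom_of_hasEnoughRootsOfUnity G ℂ

theorem Function.Injective.isMulCommutative {G M : Type*} [Group G] [CommMonoid M]
    {f : G →* M} (hf : Injective f) : IsMulCommutative G :=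
  .of_comm fun a b => hf <| by rw [map_mul, map_mul, mul_comm]

theorem MonoidHom.surjective_of_injective_of_injective_flip {P Q : Type*} [Group P] [Group Q]
    [Finite P] [Finite Q] {f : P →* Q →* ℂˣ} (hf : Injective f) (hf' : Injective f.flip) :
    Surjective f := by
  have := hf.isMulCommutative
  have := hf'.isMulCommutative
  have : Finite (Q →* ℂˣ) := Nat.finite_of_card_ne_zero <| by
    rw [Nat.card_monoidHom_complexUnits]; exact Nat.card_pos.ne'
  refine (hf.bijective_of_nat_card_le ?_).2
  calc Nat.card (Q →* ℂˣ) = Nat.card Q := Nat.card_monoidHom_complexUnits Q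
    _ ≤ Nat.card (P →* ℂˣ) := Nat.card_le_card_of_injective _ hf'
    _ = Nat.card P := Nat.card_monoidHom_complexUnits P

namespace QuotientGroup

variable {M N P : Type*} [Group M] [Group N] [CommGroup P]

def lift₂ (f : M →* N →* P) (K : Subgroup M) (L : Subgroup N) [K.Normal] [L.Normal]
    (hK : ∀ k ∈ K, ∀ n, f k n = 1) (hL : ∀ m, ∀ l ∈ L, f m l = 1) : M ⧸ K →* N ⧸ L →* P :=
  (lift L (lift K f fun k hk => MonoidHom.ext (hK k hk)).flip fun l hl =>
    MonoidHom.ext fun q => induction_on q fun m => hL m l hl).flip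

variable {f : M →* N →* P} {K : Subgroup M} {L : Subgroup N} [K.Normal] [L.Normal]
  {hK : ∀ k ∈ K, ∀ n, f k n = 1} {hL : ∀ m, ∀ l ∈ L, f m l = 1}

theorem flip_lift₂ : (lift₂ f K L hK hL).flip = lift₂ f.flip L K (fun l hl m => hL m l hl)
    (fun n k hk => hK k hk n) := by
  ext
  rfl

theorem lift₂_injective (h : ∀ m, (∀ n, f m n = 1) → m ∈ K) : Injective (lift₂ f K L hK hL) := by
  refine (injective_iff_map_eq_one _).mpr fun q hq => ?_
  induction q using induction_on with | H m =>
  exact (eq_one_iff m).mpr <| h m fun n => DFunLike.congr_fun hq (n : N ⧸ L)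

end QuotientGroup

open scoped commutatorElement

theorem commutatorElement_mem_commutator {G : Type*} [Group G] (x y : G) :
    ⁅x, y⁆ ∈ commutator G :=
  Subgroup.commutator_mem_commutator (Subgroup.mem_top x) (Subgroup.mem_top y)

section CommutatorLeCenter

open Subgroup

variable {G : Type*} [Group G]

theorem commutatorElement_mem_center (hG : commutator G ≤ center G) (x y : G) :
    ⁅x, y⁆ ∈ center G :=
  hG (commutatorElement_mem_commutator x y)

theorem commutatorElement_mul_left_of_commutator_le_center (hG : commutator G ≤ center G)
    (x y z : G) : ⁅x * y, z⁆ = ⁅x, z⁆ * ⁅y, z⁆ := by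
  have hyz := mem_center_iff.mp (commutatorElement_mem_center hG y z)
  rw [commutatorElement_mul_left_eq_conj_mul, hyz x, mul_inv_cancel_right, hyz]

theorem commutatorElement_mul_right_of_commutator_le_center (hG : commutator G ≤ center G)
    (x y z : G) : ⁅x, y * z⁆ = ⁅x, y⁆ * ⁅x, z⁆ := by
  rw [commutatorElement_mul_right_eq_mul_conj, mul_assoc _ y,
    mem_center_iff.mp (commutatorElement_mem_center hG x z) y, ← mul_assoc, mul_inv_cancel_right]

variable {M : Type*} [CommMonoid M]

def commutatorPairing (hG : commutator G ≤ center G) (χ : center G →* M) : G →* G →* M where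
  toFun x :=
    { toFun y := χ ⟨⁅x, y⁆, commutatorElement_mem_center hG x y⟩
      map_one' := by simp only [commutatorElement_one_right]; exact χ.map_one
      map_mul' y z := by
        simp only [commutatorElement_mul_right_of_commutator_le_center hG]
        exact χ.map_mul ⟨_, commutatorElement_mem_center hG x y⟩
          ⟨_, commutatorElement_mem_center hG x z⟩ }
  map_one' := by ext; simp only [commutatorElement_one_left]; exact χ.map_one
  map_mul' x y := by
    ext z
    simp only [commutatorElement_mul_left_of_commutator_le_center hG]
    exact χ.map_mul ⟨_, commutatorElement_mem_center hG x z⟩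
      ⟨_, commutatorElement_mem_center hG y z⟩

variable {hG : commutator G ≤ center G} {χ : center G →* M}

theorem commutatorPairing_apply (x y : G) :
    commutatorPairing hG χ x y = χ ⟨⁅x, y⁆, commutatorElement_mem_center hG x y⟩ := rfl

theorem commutatorPairing_eq_one_of_commute {x y : G} (h : Commute x y) :
    commutatorPairing hG χ x y = 1 := by
  simp only [commutatorPairing_apply, commutatorElement_eq_one_iff_commute.mpr h]
  exact χ.map_one

theorem mem_center_of_forall_commutatorPairing_eq_one
    (hχ : ∀ x y, commutatorPairing hG χ x y = 1 → Commute x y) {a : G}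
    (ha : ∀ x, commutatorPairing hG χ x a = 1) : a ∈ center G :=
  mem_center_iff.mpr fun x => (hχ x a (ha x)).eq

end CommutatorLeCenter

namespace Subgroup.IsMaximalAbelian

open Subgroup

variable {G : Type*} [Group G] {A : Subgroup G}

theorem isMulCommutative (hA : A.IsMaximalAbelian) : IsMulCommutative A :=
  .of_comm fun a b => Subtype.ext (hA.1 a a.2 b b.2)

theorem centralizer_le (hA : A.IsMaximalAbelian) : centralizer (A : Set G) ≤ A := by
  intro x hx
  have hcomm : ∀ p ∈ insert x (A : Set G), ∀ q ∈ insert x (A : Set G), p * q = q * p := by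
    rintro p (rfl | hp) q (rfl | hq)
    · rfl
    · exact (mem_centralizer_iff.mp hx q hq).symm
    · exact mem_centralizer_iff.mp hx p hp
    · exact hA.1 p hp q hq
  have hclosure : closure (insert x (A : Set G)) = A :=
    hA.2 _ (fun a ha => subset_closure (Set.mem_insert_of_mem x ha)) fun p hp q hq =>
      have := isMulCommutative_closure hcomm
      congrArg Subtype.val (mul_comm' (⟨p, hp⟩ : closure _) ⟨q, hq⟩)
  exact hclosure ▸ subset_closure (Set.mem_insert x _)

theorem center_le (hA : A.IsMaximalAbelian) : center G ≤ A :=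
  (center_le_centralizer _).trans hA.centralizer_le

theorem normal (hA : A.IsMaximalAbelian) (hG : _root_.commutator G ≤ center G) : A.Normal :=
  commutator_top_left_le_iff.mp <|
    (commutator_mono le_rfl le_top).trans (hG.trans hA.center_le)

variable {hG : _root_.commutator G ≤ center G}

theorem mem_of_forall_commutatorPairing_eq_one {M : Type*} [CommMonoid M] {χ : center G →* M}
    (hA : A.IsMaximalAbelian)
    (hχ : ∀ x y, commutatorPairing hG χ x y = 1 → Commute x y) {x : G}
    (hx : ∀ a ∈ A, commutatorPairing hG χ x a = 1) : x ∈ A :=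
  hA.centralizer_le <| mem_centralizer_iff.mpr fun a ha => (hχ x a (hx a ha)).eq.symm

theorem exists_commutatorPairing_eq [(center G).FiniteIndex] {χ : center G →* ℂˣ}
    (hA : A.IsMaximalAbelian) (hχ : ∀ x y, commutatorPairing hG χ x y = 1 → Commute x y)
    (ψ : A →* ℂˣ) (hψ : ∀ a : A, (a : G) ∈ center G → ψ a = 1) :
    ∃ x : G, ∀ a : A, commutatorPairing hG χ x a = ψ a := by
  have := hA.normal hG
  have := hA.isMulCommutative
  have : A.FiniteIndex := finiteIndex_of_le hA.center_le
  let Z := (center G).subgroupOf A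
  have hA_triv (x : G) (hx : x ∈ A) (a : A) : commutatorPairing hG χ x a = 1 :=
    commutatorPairing_eq_one_of_commute (hA.1 x hx a a.2)
  have hZ_triv (x : G) (a : A) (ha : a ∈ Z) : commutatorPairing hG χ x a = 1 :=
    commutatorPairing_eq_one_of_commute (mem_center_iff.mp (mem_subgroupOf.mp ha) x)
  let f := QuotientGroup.lift₂ ((commutatorPairing hG χ).compl₂ A.subtype) A Z hA_triv hZ_triv
  have hf : Injective f := QuotientGroup.lift₂_injective fun x hx =>
    hA.mem_of_forall_commutatorPairing_eq_one hχ fun a ha => hx ⟨a, ha⟩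
  have hf' : Injective f.flip := by
    rw [show f.flip = _ from QuotientGroup.flip_lift₂]
    exact QuotientGroup.lift₂_injective fun a ha =>
      mem_subgroupOf.mpr (mem_center_of_forall_commutatorPairing_eq_one hχ ha)
  obtain ⟨q, hq⟩ := MonoidHom.surjective_of_injective_of_injective_flip hf hf'
    (QuotientGroup.lift Z ψ fun a ha => hψ a (mem_subgroupOf.mp ha))
  obtain ⟨x, rfl⟩ := QuotientGroup.mk_surjective q
  exact ⟨x, fun a => DFunLike.congr_fun hq (a : A ⧸ Z)⟩

end Subgroup.IsMaximalAbelian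

/-- In a Heisenberg group with finite central quotient, any two extensions to a
maximal abelian subgroup `A` of a central character `χ` with `ker χ ∩ [H,H] = 1`
are conjugate under `H`. -/
theorem extensions_of_central_character_are_conjugate
    (H : Type*) [Group H]
    (hHeis : commutator H ≤ Subgroup.center H)
    (hfin : (Subgroup.center H).FiniteIndex)
    (A : Subgroup H) (hA : A.IsMaximalAbelian)
    (χ : Subgroup.center H →* ℂˣ)
    (hker : ∀ h ∈ commutator H, ∀ hz : h ∈ Subgroup.center H, χ ⟨h, hz⟩ = 1 → h = 1)
    (χ₁ χ₂ : A →* ℂˣ)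
    (hres₁ : ∀ (z : Subgroup.center H) (hz : (z : H) ∈ A), χ₁ ⟨z, hz⟩ = χ z)
    (hres₂ : ∀ (z : Subgroup.center H) (hz : (z : H) ∈ A), χ₂ ⟨z, hz⟩ = χ z) :
    ∃ x : H, ∀ a : A, ∀ hc : x * (a : H) * x⁻¹ ∈ A,
      χ₂ a = χ₁ ⟨x * (a : H) * x⁻¹, hc⟩ := by
  have hχ (x y : H) (h : commutatorPairing hHeis χ x y = 1) : Commute x y :=
    commutatorElement_eq_one_iff_commute.mp (hker _ (commutatorElement_mem_commutator x y) _ h)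
  obtain ⟨x, hx⟩ := hA.exists_commutatorPairing_eq hχ (χ₂ / χ₁) fun a ha => by
    rw [MonoidHom.div_apply, div_eq_one]
    exact (hres₂ ⟨a, ha⟩ a.2).trans (hres₁ ⟨a, ha⟩ a.2).symm
  refine ⟨x, fun a hc => ?_⟩
  have hxa : ⁅x, (a : H)⁆ ∈ Subgroup.center H := commutatorElement_mem_center hHeis x a
  have hconj : (⟨x * a * x⁻¹, hc⟩ : A) = ⟨⁅x, a⁆, hA.center_le hxa⟩ * a :=
    Subtype.ext (by simp [commutatorElement_def])
  rw [hconj, map_mul, hres₁ ⟨_, hxa⟩, ← commutatorPairing_apply (hG := hHeis), hx,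
    MonoidHom.div_apply, div_mul_cancel]
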